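/- For every constant d, there exists a universal graph with O(n) vertices for the family F(n,d) of forests with at most n nodes and depth at most d: a graph U_n with at most C(d)·n vertices such that every forest in F(n,d) is an induced subgraph of U_n. -/

import Mathlib

/-- A rooted forest on a finite vertex type `V`: each vertex has an optional
parent, and the depth of a root is `1` while the depth of a child is one more
than the depth of its parent (in particular the parent relation is acyclic). -/
structure RootedForest (V : Type) [Fintype V] where
  parent : V → Option V
  depth : V → ℕ
  depth_root : ∀ v, parent v = none → depth v = 1
  depth_parent : ∀ v u, parent v = some u → depth v = depth u + 1

/-- `u` is a (strict) ancestor of `v`: `u` lies on the path from `v` to its root. -/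
def RootedForest.Ancestor {V : Type} [Fintype V] (F : RootedForest V) (u v : V) : Prop :=
  Relation.TransGen (fun a b => F.parent a = some b) v u

/-- `u` and `v` are adjacent in the rooted forest `F` (one is the parent of the other). -/
def RootedForest.Adjacent {V : Type} [Fintype V] (F : RootedForest V) (u v : V) : Prop :=
  F.parent u = some v ∨ F.parent v = some u


/-!
Give a vertex `v` of depth `k` a dyadic interval of length `2 ^ (d - k) * 2 ^ ⌈log₂ |subtree v|⌉`,
packing the intervals of the children of a vertex inside its own interval in order of decreasing
length, so that they stay dyadic; the roots are packed into `[0, 2 ^ (d + ⌈log₂ n⌉))`. Rounding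
sizes up to powers of two at most doubles them, and the factor `2 ^ (d - k)` pays for that at every
level. Distinct vertices of equal depth get disjoint intervals, so `u` is the parent of `v` iff `v`
lies one level deeper and its interval is contained in that of `u`. Hence every forest is an
induced subgraph of the graph on pairs (level `≤ d`, dyadic subinterval of `[0, 2 ^ (d + ⌈log₂ n⌉))`)
joining nested intervals on consecutive levels, which has at most `d * 2 ^ (d + 2) * n` vertices.
-/

open Finset

theorem Nat.pow_clog_le_mul {b s : ℕ} (hb : 1 < b) (hs : 1 ≤ s) : b ^ Nat.clog b s ≤ b * s := by
  rcases hs.eq_or_lt with rfl | hs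
  · simpa using hb.le
  · rw [← Nat.succ_pred_eq_of_pos (Nat.clog_pos hb hs), pow_succ']
    exact Nat.mul_le_mul_left b (Nat.pow_pred_clog_lt_self hb hs).le

theorem SimpleGraph.exists_embedding_induce_fin {α : Type*} (G : SimpleGraph α) (S : Finset α)
    {N : ℕ} (hN : #S ≤ N) : ∃ U : SimpleGraph (Fin N), Nonempty (G.induce (S : Set α) ↪g U) :=
  ⟨_, ⟨SimpleGraph.Embedding.map (S.equivFin.toEmbedding.trans (Fin.castLEEmb hN)) _⟩⟩

def dyadic (e j : ℕ) : Finset ℕ := Ico (j * 2 ^ e) ((j + 1) * 2 ^ e)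

/-- The pairs `(e, j)` with `dyadic e j ⊆ [0, 2 ^ B)`. -/
def dyadicCodes (B : ℕ) : Finset (ℕ × ℕ) :=
  ((range (B + 1)).sigma fun e => range (2 ^ (B - e))).map (Equiv.sigmaEquivProd ℕ ℕ).toEmbedding

theorem card_dyadicCodes_le (B : ℕ) : #(dyadicCodes B) ≤ 2 ^ (B + 1) := by
  have hreflect : ∑ e ∈ range (B + 1), 2 ^ (B - e) = ∑ e ∈ range (B + 1), 2 ^ e :=
    sum_range_reflect (2 ^ ·) (B + 1)
  rw [dyadicCodes, card_map, card_sigma]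
  simp only [card_range]
  rw [hreflect]
  exact (Nat.geomSum_lt le_rfl fun e he => mem_range.1 he).le

theorem mem_dyadicCodes_of_subset {B e j : ℕ} (h : dyadic e j ⊆ range (2 ^ B)) :
    (e, j) ∈ dyadicCodes B := by
  have hlast : (j + 1) * 2 ^ e ≤ 2 ^ B := by
    have := Nat.two_pow_pos e
    have := @h ((j + 1) * 2 ^ e - 1) (by simp only [dyadic, mem_Ico, add_mul, one_mul]; omega)
    simp only [mem_range] at this
    omega
  have he : e ≤ B := (Nat.pow_le_pow_iff_right one_lt_two).1 (le_of_mul_le_of_one_le_right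
    (by rwa [mul_comm] at hlast) (by omega))
  rw [← Nat.sub_add_cancel he, pow_add] at hlast
  simpa [dyadicCodes, Nat.lt_succ_iff, he] using
    Nat.le_of_mul_le_mul_right hlast (Nat.two_pow_pos e)

/-- The vertex `(k, e, j)` is the interval `dyadic e j` placed on level `k`. -/
def dyadicNestingGraph : SimpleGraph (ℕ × ℕ × ℕ) :=
  SimpleGraph.fromRel fun x y => y.1 = x.1 + 1 ∧ dyadic y.2.1 y.2.2 ⊆ dyadic x.2.1 x.2.2

theorem card_levels_dyadicCodes_le {d n : ℕ} (hn : 1 ≤ n) :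
    #(Icc 1 d ×ˢ dyadicCodes (d + Nat.clog 2 n)) ≤ d * 2 ^ (d + 2) * n := by
  rw [card_product, Nat.card_Icc, Nat.add_sub_cancel, mul_assoc]
  refine Nat.mul_le_mul_left d ((card_dyadicCodes_le _).trans ?_)
  calc 2 ^ (d + Nat.clog 2 n + 1) = 2 ^ (d + 1) * 2 ^ Nat.clog 2 n := by ring
    _ ≤ 2 ^ (d + 1) * (2 * n) := Nat.mul_le_mul_left _ (Nat.pow_clog_le_mul one_lt_two hn)
    _ = 2 ^ (d + 2) * n := by ring

namespace RootedForest

variable {V : Type} [Fintype V] (F : RootedForest V)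

theorem depth_pos (v : V) : 0 < F.depth v := by
  cases h : F.parent v with
  | none => simp [F.depth_root v h]
  | some u => simp [F.depth_parent v u h]

theorem depth_lt_of_ancestor {u v : V} (h : F.Ancestor u v) : F.depth u < F.depth v := by
  induction h with
  | single h => rw [F.depth_parent _ _ h]; omega
  | tail _ h ih => rw [F.depth_parent _ _ h] at ih; omega

open scoped Classical in
noncomputable def subtree (v : V) : Finset V :=
  {w | Relation.ReflTransGen (fun a b => F.parent a = some b) w v}

theorem mem_subtree {v w : V} :
    w ∈ F.subtree v ↔ Relation.ReflTransGen (fun a b => F.parent a = some b) w v := by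
  simp [subtree]

theorem self_mem_subtree (v : V) : v ∈ F.subtree v := F.mem_subtree.2 .refl

theorem subtree_subset_of_parent {v u : V} (h : F.parent v = some u) :
    F.subtree v ⊆ F.subtree u := fun _ hw => F.mem_subtree.2 ((F.mem_subtree.1 hw).tail h)

theorem eq_of_mem_subtree_of_depth_eq {u v w : V} (hu : w ∈ F.subtree u) (hv : w ∈ F.subtree v)
    (h : F.depth u = F.depth v) : u = v := by
  have huniq : Relator.RightUnique fun a b : V => F.parent a = some b :=
    fun _ _ _ hb hc => Option.some.inj (hb.symm.trans hc)
  rcases (F.mem_subtree.1 hu).total_of_right_unique huniq (F.mem_subtree.1 hv) with h' | h' <;>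
    rcases Relation.reflTransGen_iff_eq_or_transGen.1 h' with rfl | h'
  · rfl
  · exact absurd h (F.depth_lt_of_ancestor h').ne'
  · rfl
  · exact absurd h (F.depth_lt_of_ancestor h').ne

open scoped Classical in
/-- On `Option V`, `none` plays the role of a virtual root whose children are the roots. -/
noncomputable def children (o : Option V) : Finset V := {w | F.parent w = o}

theorem mem_children {o : Option V} {w : V} : w ∈ F.children o ↔ F.parent w = o := by
  simp [children]

def level (o : Option V) : ℕ := o.elim 0 F.depth

noncomputable def scope (o : Option V) : Finset V := o.elim univ F.subtree

theorem depth_eq_level_parent_add_one (v : V) : F.depth v = F.level (F.parent v) + 1 := by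
  cases h : F.parent v with
  | none => simp [level, F.depth_root v h]
  | some u => simp [level, F.depth_parent v u h]

theorem subtree_subset_scope_parent (v : V) : F.subtree v ⊆ F.scope (F.parent v) := by
  cases h : F.parent v with
  | none => exact subset_univ _
  | some u => exact F.subtree_subset_of_parent h

theorem sum_card_subtree_children_le (o : Option V) :
    ∑ w ∈ F.children o, #(F.subtree w) ≤ #(F.scope o) := by
  classical
  have hdisj : (F.children o : Set V).PairwiseDisjoint F.subtree := by
    intro w hw w' hw' hne
    refine disjoint_left.2 fun x hx hx' => hne (F.eq_of_mem_subtree_of_depth_eq hx hx' ?_)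
    rw [F.depth_eq_level_parent_add_one, F.depth_eq_level_parent_add_one,
      F.mem_children.1 hw, F.mem_children.1 hw']
  rw [← card_biUnion hdisj]
  refine card_le_card (biUnion_subset.2 fun w hw => ?_)
  simpa [F.mem_children.1 hw] using F.subtree_subset_scope_parent w

variable (d : ℕ)

noncomputable def ex (o : Option V) : ℕ := (d - F.level o) + Nat.clog 2 #(F.scope o)

noncomputable def len (o : Option V) : ℕ := 2 ^ F.ex d o

theorem len_pos (o : Option V) : 0 < F.len d o := Nat.two_pow_pos _

theorem ex_le_ex_parent (v : V) : F.ex d (some v) ≤ F.ex d (F.parent v) := by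
  have hdepth := F.depth_eq_level_parent_add_one v
  have hclog := Nat.clog_mono_right 2 (card_le_card (F.subtree_subset_scope_parent v))
  simp only [ex, level, scope, Option.elim] at *
  omega

theorem sum_len_children_le (hdep : ∀ v, F.depth v ≤ d) (o : Option V) :
    ∑ w ∈ F.children o, F.len d (some w) ≤ F.len d o := by
  rcases (F.children o).eq_empty_or_nonempty with h | ⟨w₀, hw₀⟩
  · simp [h]
  have hlt : F.level o < d := by
    have := hdep w₀
    rw [F.depth_eq_level_parent_add_one, F.mem_children.1 hw₀] at this
    omega
  calc ∑ w ∈ F.children o, F.len d (some w)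
      = ∑ w ∈ F.children o, 2 ^ (d - (F.level o + 1)) * 2 ^ Nat.clog 2 #(F.subtree w) :=
        sum_congr rfl fun w hw => by
          rw [len, ex, pow_add, ← F.mem_children.1 hw, ← F.depth_eq_level_parent_add_one]; rfl
    _ ≤ ∑ w ∈ F.children o, 2 ^ (d - (F.level o + 1)) * (2 * #(F.subtree w)) :=
        sum_le_sum fun w _ => Nat.mul_le_mul_left _
          (Nat.pow_clog_le_mul one_lt_two (card_pos.2 ⟨w, F.self_mem_subtree w⟩))
    _ = 2 ^ (d - F.level o) * ∑ w ∈ F.children o, #(F.subtree w) := by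
        rw [← mul_sum, ← mul_sum, ← mul_assoc, ← pow_succ, Nat.sub_add_eq,
          Nat.sub_add_cancel (by omega)]
    _ ≤ 2 ^ (d - F.level o) * 2 ^ Nat.clog 2 #(F.scope o) :=
        Nat.mul_le_mul_left _
          ((F.sum_card_subtree_children_le o).trans (Nat.le_pow_clog one_lt_two _))
    _ = F.len d o := by rw [len, ex, pow_add]

/-- Siblings are packed in order of decreasing interval length, which keeps every interval
aligned to a multiple of its length. -/
noncomputable def key (v : V) : ℕᵒᵈ ×ₗ Fin (Fintype.card V) :=
  toLex (OrderDual.toDual (F.ex d (some v)), Fintype.equivFin V v)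

theorem key_injective : Function.Injective (F.key d) :=
  fun _ _ h => (Fintype.equivFin V).injective (congrArg (fun x => (ofLex x).2) h)

theorem ex_le_of_key_lt {v w : V} (h : F.key d w < F.key d v) :
    F.ex d (some v) ≤ F.ex d (some w) := by
  rcases Prod.Lex.toLex_lt_toLex.1 h with h | ⟨h, -⟩
  · exact (OrderDual.toDual_lt_toDual.1 h).le
  · exact (OrderDual.toDual_inj.1 h).ge

open scoped Classical in
noncomputable def pos (v : V) : ℕ :=
  (match h : F.parent v with
    | none => 0
    | some u => have := F.depth_parent v u h; pos u) +
  ∑ w ∈ F.children (F.parent v) with F.key d w < F.key d v, F.len d (some w)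
termination_by F.depth v

noncomputable def start (o : Option V) : ℕ := o.elim 0 (F.pos d)

open scoped Classical in
theorem pos_eq (v : V) : F.pos d v = F.start d (F.parent v) +
    ∑ w ∈ F.children (F.parent v) with F.key d w < F.key d v, F.len d (some w) := by
  rw [pos]
  split <;> simp only [start, Option.elim, *]

noncomputable def interval (o : Option V) : Finset ℕ :=
  Ico (F.start d o) (F.start d o + F.len d o)

open scoped Classical in
theorem pos_add_len_eq (v : V) : F.pos d v + F.len d (some v) = F.start d (F.parent v) +
    ∑ w ∈ F.children (F.parent v) with F.key d w ≤ F.key d v, F.len d (some w) := by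
  have hinsert : {w ∈ F.children (F.parent v) | F.key d w ≤ F.key d v} =
      insert v {w ∈ F.children (F.parent v) | F.key d w < F.key d v} := by
    ext w
    simp only [mem_filter, mem_insert, le_iff_lt_or_eq, (F.key_injective d).eq_iff]
    constructor
    · rintro ⟨hw, h | rfl⟩ <;> tauto
    · rintro (rfl | h) <;> simp_all [F.mem_children]
  rw [hinsert, sum_insert (by simp), pos_eq, add_comm (F.len d _), add_assoc]

theorem interval_subset_parent (hdep : ∀ v, F.depth v ≤ d) (v : V) :
    F.interval d (some v) ⊆ F.interval d (F.parent v) := by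
  classical
  refine Ico_subset_Ico (by simp [start, F.pos_eq d v]) ?_
  rw [start, Option.elim, pos_add_len_eq]
  gcongr
  exact (sum_le_sum_of_subset (filter_subset _ _)).trans (F.sum_len_children_le d hdep _)

theorem interval_subset_interval_none (hdep : ∀ v, F.depth v ≤ d) (v : V) :
    F.interval d (some v) ⊆ F.interval d none := by
  refine (F.interval_subset_parent d hdep v).trans ?_
  match h : F.parent v with
  | none => exact subset_rfl
  | some u =>
    have := F.depth_parent v u h
    exact interval_subset_interval_none hdep u
termination_by F.depth v

theorem disjoint_interval_of_key_lt {v v' : V} (hp : F.parent v = F.parent v')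
    (hk : F.key d v < F.key d v') : Disjoint (F.interval d (some v)) (F.interval d (some v')) := by
  classical
  have hle : F.pos d v + F.len d (some v) ≤ F.pos d v' := by
    rw [pos_add_len_eq, F.pos_eq d v', hp]
    gcongr
  exact disjoint_left.2 fun x hx hx' => by
    simp only [interval, start, Option.elim, mem_Ico] at hx hx'
    omega

theorem disjoint_interval_of_depth_eq (hdep : ∀ v, F.depth v ≤ d) {v v' : V}
    (h : F.depth v = F.depth v') (hne : v ≠ v') :
    Disjoint (F.interval d (some v)) (F.interval d (some v')) := by
  by_cases hp : F.parent v = F.parent v'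
  · rcases lt_or_gt_of_ne ((F.key_injective d).ne hne) with hk | hk
    · exact F.disjoint_interval_of_key_lt d hp hk
    · exact (F.disjoint_interval_of_key_lt d hp.symm hk).symm
  have hlevel := F.depth_eq_level_parent_add_one v
  have hlevel' := F.depth_eq_level_parent_add_one v'
  match hq : F.parent v, hq' : F.parent v' with
  | none, none => exact absurd (hq.trans hq'.symm) hp
  | none, some p' =>
    simp only [level, hq, hq', Option.elim] at hlevel hlevel'
    have := F.depth_pos p'
    omega
  | some p, none =>
    simp only [level, hq, hq', Option.elim] at hlevel hlevel'
    have := F.depth_pos p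
    omega
  | some p, some p' =>
    have hpp : p ≠ p' := fun hpp => hp (by rw [hq, hq', hpp])
    have hdepth := F.depth_parent v p hq
    have hdepth' := F.depth_parent v' p' hq'
    refine (disjoint_interval_of_depth_eq hdep (v := p) (v' := p') (by omega) hpp).mono ?_ ?_
    · simpa [hq] using F.interval_subset_parent d hdep v
    · simpa [hq'] using F.interval_subset_parent d hdep v'
termination_by F.depth v

theorem len_dvd_pos (v : V) : F.len d (some v) ∣ F.pos d v := by
  classical
  rw [pos_eq]
  refine dvd_add ?_ (dvd_sum fun w hw => pow_dvd_pow 2 (F.ex_le_of_key_lt d (mem_filter.1 hw).2))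
  have hex := F.ex_le_ex_parent d v
  match h : F.parent v with
  | none => exact dvd_zero _
  | some u =>
    have := F.depth_parent v u h
    rw [h] at hex
    exact (pow_dvd_pow 2 hex).trans (len_dvd_pos u)
termination_by F.depth v

theorem pos_mem_interval (v : V) : F.pos d v ∈ F.interval d (some v) := by
  simp [interval, start, F.len_pos d]

theorem parent_eq_some_iff (hdep : ∀ v, F.depth v ≤ d) {u v : V} :
    F.parent v = some u ↔
      F.depth v = F.depth u + 1 ∧ F.interval d (some v) ⊆ F.interval d (some u) := by
  refine ⟨fun h => ⟨F.depth_parent v u h, h ▸ F.interval_subset_parent d hdep v⟩,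
    fun ⟨hdepth, hsub⟩ => ?_⟩
  have hsub' := F.interval_subset_parent d hdep v
  cases hp : F.parent v with
  | none => have := F.depth_root v hp; have := F.depth_pos u; omega
  | some p =>
    rw [hp] at hsub'
    by_contra hne
    refine disjoint_left.1
      (F.disjoint_interval_of_depth_eq d hdep ?_ fun h => hne (congrArg some h))
      (hsub' (F.pos_mem_interval d v)) (hsub (F.pos_mem_interval d v))
    rw [F.depth_parent v p hp] at hdepth
    omega

noncomputable def label (v : V) : ℕ × ℕ × ℕ :=
  (F.depth v, F.ex d (some v), F.pos d v / F.len d (some v))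

theorem dyadic_label (v : V) :
    dyadic (F.label d v).2.1 (F.label d v).2.2 = F.interval d (some v) := by
  obtain ⟨j, hj⟩ := F.len_dvd_pos d v
  simp only [label, dyadic, interval, start, Option.elim, hj,
    Nat.mul_div_cancel_left _ (F.len_pos d _)]
  rw [len] at hj ⊢
  congr 1 <;> ring

theorem label_injective (hdep : ∀ v, F.depth v ≤ d) : Function.Injective (F.label d) := by
  intro u v h
  by_contra hne
  have hdisj := F.disjoint_interval_of_depth_eq d hdep (congrArg Prod.fst h) hne
  have hinterval : F.interval d (some u) = F.interval d (some v) := by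
    rw [← dyadic_label, ← dyadic_label, h]
  exact disjoint_left.1 hdisj (F.pos_mem_interval d u) (hinterval ▸ F.pos_mem_interval d u)

theorem adjacent_iff_adj_label (hdep : ∀ v, F.depth v ≤ d) (u v : V) :
    F.Adjacent u v ↔ dyadicNestingGraph.Adj (F.label d u) (F.label d v) := by
  simp only [dyadicNestingGraph, SimpleGraph.fromRel_adj, dyadic_label, Adjacent,
    F.parent_eq_some_iff d hdep]
  refine ⟨fun h => ⟨fun heq => ?_, h.symm⟩, fun h => h.2.symm⟩
  have := congrArg Prod.fst heq
  simp only [label] at this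
  omega

theorem label_mem (hdep : ∀ v, F.depth v ≤ d) {n : ℕ} (hcard : Fintype.card V ≤ n) (v : V) :
    F.label d v ∈ Icc 1 d ×ˢ dyadicCodes (d + Nat.clog 2 n) := by
  refine mem_product.2 ⟨mem_Icc.2 ⟨F.depth_pos v, hdep v⟩, mem_dyadicCodes_of_subset ?_⟩
  refine (F.dyadic_label d v).trans_subset ((F.interval_subset_interval_none d hdep v).trans ?_)
  simp only [interval, start, len, ex, level, scope, Option.elim, card_univ, zero_add,
    Nat.sub_zero, range_eq_Ico]
  exact Ico_subset_Ico_right (Nat.pow_le_pow_right two_pos (by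
    have := Nat.clog_mono_right 2 hcard; omega))

end RootedForest

/-- For every constant `d` there is a constant `C(d)` such that, for every `n`,
there is a universal graph on at most `C(d)·n` vertices for the family `F(n,d)`:
every rooted forest with at most `n` nodes and depth at most `d`, viewed as an
undirected graph via its parent-child edges, embeds as an induced subgraph. -/
theorem universal_graph_for_bounded_depth_forests (d : ℕ) (hd : 1 ≤ d) :
    ∃ C : ℕ, 0 < C ∧ ∀ n : ℕ,
      ∃ (N : ℕ) (U : SimpleGraph (Fin N)), N ≤ C * n ∧
        ∀ (V : Type) [Fintype V] (F : RootedForest V),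
          Fintype.card V ≤ n → (∀ v, F.depth v ≤ d) →
          ∃ φ : V → Fin N, Function.Injective φ ∧
            ∀ u v : V, F.Adjacent u v ↔ U.Adj (φ u) (φ v) := by
  refine ⟨d * 2 ^ (d + 2), by positivity, fun n => ?_⟩
  rcases Nat.eq_zero_or_pos n with rfl | hn
  · refine ⟨0, ⊥, le_rfl, fun V _ F hcard _ => ?_⟩
    have : IsEmpty V := Fintype.card_eq_zero_iff.1 (Nat.le_zero.1 hcard)
    exact ⟨isEmptyElim, fun u => isEmptyElim u, fun u => isEmptyElim u⟩
  set S := Icc 1 d ×ˢ dyadicCodes (d + Nat.clog 2 n)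
  obtain ⟨U, ⟨ψ⟩⟩ := dyadicNestingGraph.exists_embedding_induce_fin S le_rfl
  refine ⟨#S, U, card_levels_dyadicCodes_le hn, fun V _ F hcard hdep => ?_⟩
  refine ⟨fun v => ψ ⟨F.label d v, F.label_mem d hdep hcard v⟩,
    fun u v h => F.label_injective d hdep (congrArg Subtype.val (ψ.injective h)), fun u v => ?_⟩
  rw [ψ.map_adj_iff, SimpleGraph.induce_adj, F.adjacent_iff_adj_label d hdep]
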